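/- arXiv:1605.02164 — 3 statements merged into one kernel-verified Lean document; each statement's English description precedes it below -/
import Mathlib

section
/- Fix natural numbers d ≥ 1 and T ≥ 1, a finite set W ⊆ ℤ², functions ω : ℤ² → ℝ, g : ℤ² → (Fin d → ℝ), f : ℤ² → (Fin d → ℝ), reals γ_1,…,γ_d, natural number N, and a family Y : Fin T → Fin d → ℝ. Define H_t(i) = ∏_{k=1}^{d} exp(ι Y_{t,k} γ_k g_k(i)) ∈ ℂ for i ∈ ℤ², and define the Monte Carlo kernel ψ̂ : (Fin d → ℝ) → ℂ by ψ̂(y) = (1/T) Σ_{t=1}^{T} ∏_{k=1}^{d} exp(ι Y_{t,k} γ_k y_k). Then for every pixel i ∈ ℤ² and every component index m ∈ {1,…,d}: Σ_{j ∈ W} ω(j) · ψ̂( g(i−j) − g(i) ) · f_m(i−j) = (1/T) Σ_{t=1}^{T} conj(H_t(i)) · ( Σ_{j ∈ W} ω(j) · H_t(i−j) · f_m(i−j) ), where ι = √−1 and conj denotes complex conjugation. -/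
open Complex Finset

lemma conj_exp_I_mul (x : ℝ) :
    (starRingEnd ℂ) (Complex.exp (Complex.I * x)) = Complex.exp (-(Complex.I * x)) := by
  rw [← Complex.exp_conj]
  simp

/-- Numerator identity of the fast bilateral filtering algorithm (MCSF): with the
Monte Carlo range kernel `ψ̂(y) = (1/T) ∑_t ∏_k exp(ι Y_{t,k} γ_k y_k)` and the
modulated images `H_t(i) = ∏_k exp(ι Y_{t,k} γ_k g_k(i))`, the bilateral-filter
numerator over a finite window `W` equals `(1/T) ∑_t conj(H_t(i)) · (ω ∗ (H_t f_m))(i)`. -/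
theorem mcsf_numerator_identity
    (d T : ℕ) (hd : 1 ≤ d) (hT : 1 ≤ T)
    (W : Finset (ℤ × ℤ)) (ω : ℤ × ℤ → ℝ) (g f : ℤ × ℤ → Fin d → ℝ)
    (γ : Fin d → ℝ) (N : ℕ) (Y : Fin T → Fin d → ℝ)
    (H : Fin T → ℤ × ℤ → ℂ)
    (hH : ∀ (t : Fin T) (i : ℤ × ℤ),
      H t i = ∏ k : Fin d, Complex.exp (Complex.I * (Y t k : ℂ) * (γ k : ℂ) * (g i k : ℂ)))
    (ψ : (Fin d → ℝ) → ℂ)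
    (hψ : ∀ y : Fin d → ℝ,
      ψ y = ((T : ℂ))⁻¹ * ∑ t : Fin T,
        ∏ k : Fin d, Complex.exp (Complex.I * (Y t k : ℂ) * (γ k : ℂ) * (y k : ℂ))) :
    ∀ (i : ℤ × ℤ) (m : Fin d),
      ∑ j ∈ W, (ω j : ℂ) * ψ (fun k => g (i - j) k - g i k) * (f (i - j) m : ℂ) =
        ((T : ℂ))⁻¹ * ∑ t : Fin T, (starRingEnd ℂ) (H t i) *
          ∑ j ∈ W, (ω j : ℂ) * H t (i - j) * (f (i - j) m : ℂ) := by
  intro i m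
  have key : ∀ (t : Fin T) (j : ℤ × ℤ),
      (∏ k : Fin d, Complex.exp (Complex.I * (Y t k : ℂ) * (γ k : ℂ) *
        ((g (i - j) k - g i k : ℝ) : ℂ))) = (starRingEnd ℂ) (H t i) * H t (i - j) := by
    intro t j
    rw [hH, hH, map_prod, ← Finset.prod_mul_distrib]
    refine Finset.prod_congr rfl fun k _ => ?_
    have : Complex.I * (Y t k : ℂ) * (γ k : ℂ) * ((g (i - j) k - g i k : ℝ) : ℂ)
        = -(Complex.I * ((Y t k * γ k * g i k : ℝ) : ℂ))
          + Complex.I * ((Y t k * γ k * g (i - j) k : ℝ) : ℂ) := by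
      push_cast; ring
    rw [this, Complex.exp_add]
    congr 1
    · rw [show Complex.I * (Y t k : ℂ) * (γ k : ℂ) * ((g i k : ℝ) : ℂ)
        = Complex.I * ((Y t k * γ k * g i k : ℝ) : ℂ) by push_cast; ring,
        conj_exp_I_mul]
    · push_cast; ring_nf
  simp only [hψ, Finset.mul_sum, Finset.sum_mul]
  rw [Finset.sum_comm]
  refine Finset.sum_congr rfl fun t _ => ?_
  refine Finset.sum_congr rfl fun j _ => ?_
  have := key t j
  push_cast at this ⊢
  rw [this]; ring
end

section
/- Fix natural numbers d ≥ 1 and T ≥ 1, a finite set W ⊆ ℤ², functions ω : ℤ² → ℝ and g : ℤ² → (Fin d → ℝ), reals γ_1,…,γ_d, and a family Y : Fin T → Fin d → ℝ. Define H_t(i) = ∏_{k=1}^{d} exp(ι Y_{t,k} γ_k g_k(i)) ∈ ℂ for i ∈ ℤ², and ψ̂(y) = (1/T) Σ_{t=1}^{T} ∏_{k=1}^{d} exp(ι Y_{t,k} γ_k y_k). Then for every pixel i ∈ ℤ²: Σ_{j ∈ W} ω(j) · ψ̂( g(i−j) − g(i) ) = (1/T) Σ_{t=1}^{T} conj(H_t(i))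 · ( Σ_{j ∈ W} ω(j) · H_t(i−j) ), where ι = √−1 and conj denotes complex conjugation. -/
open Complex Finset

/-- Normalization (denominator) identity of the fast bilateral filtering algorithm
(MCSF): with the Monte Carlo range kernel `ψ̂(y) = (1/T) ∑_t ∏_k exp(ι Y_{t,k} γ_k y_k)`
and the modulated images `H_t(i) = ∏_k exp(ι Y_{t,k} γ_k g_k(i))`, the normalizing factor
`Z(i) = ∑_{j ∈ W} ω(j) ψ̂(g(i-j) - g(i))` equals `(1/T) ∑_t conj(H_t(i)) · (ω ∗ H_t)(i)`. -/
theorem mcsf_denominator_identity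
    (d T : ℕ) (hd : 1 ≤ d) (hT : 1 ≤ T)
    (W : Finset (ℤ × ℤ)) (ω : ℤ × ℤ → ℝ) (g : ℤ × ℤ → Fin d → ℝ)
    (γ : Fin d → ℝ) (Y : Fin T → Fin d → ℝ)
    (H : Fin T → ℤ × ℤ → ℂ)
    (hH : ∀ (t : Fin T) (i : ℤ × ℤ),
      H t i = ∏ k : Fin d, Complex.exp (Complex.I * (Y t k : ℂ) * (γ k : ℂ) * (g i k : ℂ)))
    (ψ : (Fin d → ℝ) → ℂ)
    (hψ : ∀ y : Fin d → ℝ,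
      ψ y = ((T : ℂ))⁻¹ * ∑ t : Fin T,
        ∏ k : Fin d, Complex.exp (Complex.I * (Y t k : ℂ) * (γ k : ℂ) * (y k : ℂ))) :
    ∀ i : ℤ × ℤ,
      ∑ j ∈ W, (ω j : ℂ) * ψ (fun k => g (i - j) k - g i k) =
        ((T : ℂ))⁻¹ * ∑ t : Fin T, (starRingEnd ℂ) (H t i) *
          ∑ j ∈ W, (ω j : ℂ) * H t (i - j) := by
  intro i
  have key : ∀ (t : Fin T) (j : ℤ × ℤ),
      (starRingEnd ℂ) (H t i) * H t (i - j) =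
      ∏ k : Fin d, Complex.exp
        (Complex.I * (Y t k : ℂ) * (γ k : ℂ) * ((g (i - j) k - g i k : ℝ) : ℂ)) := by
    intro t j
    rw [hH, hH, map_prod, ← Finset.prod_mul_distrib]
    refine Finset.prod_congr rfl fun k _ => ?_
    rw [← Complex.exp_conj, ← Complex.exp_add]
    congr 1
    simp [Complex.conj_I]
    push_cast
    ring
  calc ∑ j ∈ W, (ω j : ℂ) * ψ (fun k => g (i - j) k - g i k)
      = ∑ j ∈ W, (T : ℂ)⁻¹ * ∑ t : Fin T, (ω j : ℂ) *
          ((starRingEnd ℂ) (H t i) * H t (i - j)) := by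
        refine Finset.sum_congr rfl fun j _ => ?_
        rw [hψ]; simp only [Finset.mul_sum]
        refine Finset.sum_congr rfl fun t _ => ?_
        rw [key t j]; ring
    _ = (T : ℂ)⁻¹ * ∑ t : Fin T, (starRingEnd ℂ) (H t i) *
          ∑ j ∈ W, (ω j : ℂ) * H t (i - j) := by
        rw [← Finset.mul_sum, Finset.sum_comm]
        congr 1
        refine Finset.sum_congr rfl fun t _ => ?_
        rw [Finset.mul_sum]
        refine Finset.sum_congr rfl fun j _ => ?_
        ring
end

section
/- Let d, N, T be natural numbers with T ≥ 1, and let γ_1,…,γ_d, y_1,…,y_d be real numbers. Consider T·d independent random variables X_k^{(t)} (t = 1,…,T; k = 1,…,d), each with the binomial distribution B(N,1/2). Then the Monte Carlo estimator (1/T) Σ_{t=1}^{T} ∏_{k=1}^{d} exp(ι(N − 2X_k^{(t)}) γ_k y_k) is an unbiased estimate of the raised-cosine kernel: its expectation equals ∏_{k=1}^{d} (cos(γ_k y_k))^N. Equivalently, as a finite sum: Σ over all arrays (n_k^{(t)}) ∈ {0,…,N}^{T·d} of [∏_{t=1}^{T} ∏_{k=1}^{d} 2^{-N} C(N, n_k^{(t)})]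 · (1/T) Σ_{t=1}^{T} ∏_{k=1}^{d} exp(ι(N − 2n_k^{(t)}) γ_k y_k) equals ∏_{k=1}^{d} (cos(γ_k y_k))^N. -/
open Complex Finset

lemma cos_pow_expand (N : ℕ) (θ : ℝ) :
    ∑ j : Fin (N+1), ((2:ℂ)^N)⁻¹ * (N.choose j : ℂ) *
      Complex.exp (Complex.I * ((N:ℂ) - 2*((j:ℕ):ℂ)) * (θ:ℂ)) = ((Real.cos θ : ℂ))^N := by
  have hc : (Real.cos θ : ℂ) = (Complex.exp (-((θ:ℂ)*Complex.I)) + Complex.exp ((θ:ℂ)*Complex.I)) / 2 := by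
    rw [Complex.ofReal_cos, Complex.cos]
    ring_nf
  rw [hc, div_pow, add_pow, Finset.sum_div,
    ← Fin.sum_univ_eq_sum_range (fun m =>
      Complex.exp (-((θ:ℂ)*Complex.I)) ^ m * Complex.exp ((θ:ℂ)*Complex.I) ^ (N - m) *
        (N.choose m : ℂ) / 2 ^ N)]
  refine Finset.sum_congr rfl fun j _ => ?_
  have hjN : (j:ℕ) ≤ N := Nat.lt_succ_iff.mp j.isLt
  show _ = _ ^ (j:ℕ) * _ ^ (N - (j:ℕ)) * _ / _
  rw [← Complex.exp_nat_mul, ← Complex.exp_nat_mul, ← Complex.exp_add]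
  have h2 : ((N - (j:ℕ) : ℕ) : ℂ) = (N : ℂ) - (j:ℕ) := by push_cast [hjN]; ring
  rw [h2, show ((j:ℕ):ℂ) * -((θ:ℂ)*Complex.I) + ((N:ℂ) - ((j:ℕ):ℂ)) * ((θ:ℂ)*Complex.I)
      = Complex.I * ((N:ℂ) - 2*((j:ℕ):ℂ)) * (θ:ℂ) by ring]
  have : (2:ℂ)^N ≠ 0 := pow_ne_zero _ two_ne_zero
  field_simp

lemma prob_sum_one (N : ℕ) :
    ∑ j : Fin (N+1), ((2:ℂ)^N)⁻¹ * (N.choose j : ℂ) = 1 := by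
  rw [← Finset.mul_sum, Fin.sum_univ_eq_sum_range (fun m => (N.choose m : ℂ))]
  have h : ∑ m ∈ Finset.range (N+1), (N.choose m : ℂ) = (2:ℂ)^N := by
    exact_mod_cast congrArg (Nat.cast (R := ℂ)) (Nat.sum_range_choose N)
  rw [h, inv_mul_cancel₀ (pow_ne_zero _ two_ne_zero)]

/-- Unbiasedness of the Monte Carlo estimator: for `T·d` independent `B(N,1/2)`
variables `X_k^{(t)}`, the expectation of the Monte Carlo average
`(1/T) ∑_t ∏_k exp(ι (N - 2 X_k^{(t)}) γ_k y_k)` equals the raised-cosine kernel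
`∏_k (cos (γ_k y_k))^N`, written as a finite sum over all outcome arrays weighted
by the joint binomial probabilities. -/
theorem monte_carlo_estimator_unbiased
    (d N T : ℕ) (hT : 1 ≤ T) (γ y : Fin d → ℝ) :
    ∑ n : Fin T → Fin d → Fin (N + 1),
        (∏ t : Fin T, ∏ k : Fin d, ((2 : ℂ) ^ N)⁻¹ * (N.choose (n t k) : ℂ)) *
          (((T : ℂ))⁻¹ * ∑ t : Fin T,
            ∏ k : Fin d,
              Complex.exp (Complex.I * ((N : ℂ) - 2 * ((n t k : ℕ) : ℂ)) *
                ((γ k * y k : ℝ) : ℂ))) =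
      ∏ k : Fin d, ((Real.cos (γ k * y k) : ℂ)) ^ N := by
  set p : Fin (N+1) → ℂ := fun j => ((2 : ℂ) ^ N)⁻¹ * (N.choose j : ℂ) with hp
  set g : Fin d → Fin (N+1) → ℂ := fun k j =>
    Complex.exp (Complex.I * ((N : ℂ) - 2 * ((j : ℕ) : ℂ)) * ((γ k * y k : ℝ) : ℂ)) with hg
  set C : ℂ := ∏ k : Fin d, ((Real.cos (γ k * y k) : ℂ)) ^ N with hC
  have key : ∀ t : Fin T,
      ∑ n : Fin T → Fin d → Fin (N + 1),
        (∏ t' : Fin T, ∏ k : Fin d, p (n t' k)) * ∏ k : Fin d, g k (n t k) = C := by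
    intro t
    have step1 : ∀ n : Fin T → Fin d → Fin (N + 1),
        (∏ t' : Fin T, ∏ k : Fin d, p (n t' k)) * ∏ k : Fin d, g k (n t k)
        = ∏ t' : Fin T, ∏ k : Fin d,
            (p (n t' k) * if t' = t then g k (n t' k) else 1) := by
      intro n
      have : ∀ t' : Fin T, ∏ k : Fin d, (p (n t' k) * if t' = t then g k (n t' k) else 1)
          = (∏ k : Fin d, p (n t' k)) * if t' = t then ∏ k : Fin d, g k (n t' k) else 1 := by
        intro t'
        rw [Finset.prod_mul_distrib]
        congr 1
        split <;> simp
      rw [Finset.prod_congr rfl (fun t' _ => this t'), Finset.prod_mul_distrib,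
        Finset.prod_ite_eq' univ t (fun t' => ∏ k : Fin d, g k (n t' k))]
      simp
    rw [Finset.sum_congr rfl (fun n _ => step1 n)]
    rw [show (univ : Finset (Fin T → Fin d → Fin (N+1)))
        = Fintype.piFinset (fun _ => univ) from (Fintype.piFinset_univ).symm,
      ← Finset.prod_univ_sum (fun _ => (univ : Finset (Fin d → Fin (N+1))))
        (fun t' m => ∏ k : Fin d, (p (m k) * if t' = t then g k (m k) else 1))]
    have inner : ∀ t' : Fin T,
        (∑ m : Fin d → Fin (N+1), ∏ k : Fin d, (p (m k) * if t' = t then g k (m k) else 1))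
        = if t' = t then C else 1 := by
      intro t'
      rw [show (univ : Finset (Fin d → Fin (N+1)))
          = Fintype.piFinset (fun _ => univ) from (Fintype.piFinset_univ).symm,
        ← Finset.prod_univ_sum (fun _ => (univ : Finset (Fin (N+1))))
          (fun k j => p j * if t' = t then g k j else 1)]
      split_ifs with h
      · rw [hC]
        refine Finset.prod_congr rfl fun k _ => ?_
        rw [← cos_pow_expand N (γ k * y k)]
      · refine Finset.prod_eq_one fun k _ => ?_
        simpa using prob_sum_one N
    rw [Finset.prod_congr rfl (fun t' _ => inner t'), Finset.prod_ite_eq' univ t (fun _ => C)]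
    simp
  calc ∑ n : Fin T → Fin d → Fin (N + 1),
        (∏ t' : Fin T, ∏ k : Fin d, p (n t' k)) *
          (((T : ℂ))⁻¹ * ∑ t : Fin T, ∏ k : Fin d, g k (n t k))
      = ∑ n : Fin T → Fin d → Fin (N + 1), ∑ t : Fin T, ((T : ℂ))⁻¹ *
          ((∏ t' : Fin T, ∏ k : Fin d, p (n t' k)) * ∏ k : Fin d, g k (n t k)) := by
        refine Finset.sum_congr rfl fun n _ => ?_
        rw [Finset.mul_sum, Finset.mul_sum]
        exact Finset.sum_congr rfl fun t _ => by ring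
    _ = ∑ t : Fin T, ∑ n : Fin T → Fin d → Fin (N + 1), ((T : ℂ))⁻¹ *
          ((∏ t' : Fin T, ∏ k : Fin d, p (n t' k)) * ∏ k : Fin d, g k (n t k)) :=
        Finset.sum_comm
    _ = ∑ t : Fin T, ((T : ℂ))⁻¹ * C := by
        refine Finset.sum_congr rfl fun t _ => ?_
        rw [← Finset.mul_sum, key t]
    _ = C := by
        rw [Finset.sum_const, card_univ, Fintype.card_fin, nsmul_eq_mul]
        have hT0 : (T : ℂ) ≠ 0 := Nat.cast_ne_zero.mpr (Nat.one_le_iff_ne_zero.mp hT)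
        field_simp
end
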